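/- arXiv:2009.02064 — 6 statements merged into one kernel-verified Lean document; each statement's English description precedes it below -/
import Mathlib

section
/- Let ρ > 0 be a real number and ω ∈ ℂ with |ω| = 1 and Im(ω) < 0. Define ψ : ℝ → ℂ × ℂ by ψ(z) = (e^{ρ·Im(ω)·z}, ω·e^{ρ·Im(ω)·z}). Then ψ satisfies the eigenvalue equation (D(ρ)ψ)(z) = ρ·Re(ω)·ψ(z) for all z ≥ 0, ψ(0) = (1, ω), ψ is square-integrable on [0,∞), ψ is nowhere zero, and the eigenvalue ρ·Re(ω) lies in the open interval (−ρ, ρ). -/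
open MeasureTheory

/-- The formal half-line Dirac operator with mass `ρ` acting on differentiable
functions `ψ = (ψ₁, ψ₂) : ℝ → ℂ × ℂ`:
`(D(ρ)ψ)(z) = (−i·ψ₁′(z) + ρ·ψ₂(z), ρ·ψ₁(z) + i·ψ₂′(z))`. -/
noncomputable def diracHalfLine (ρ : ℝ) (ψ : ℝ → ℂ × ℂ) (z : ℝ) : ℂ × ℂ :=
  (-Complex.I * deriv (fun t => (ψ t).1) z + (ρ : ℂ) * (ψ z).2,
   (ρ : ℂ) * (ψ z).1 + Complex.I * deriv (fun t => (ψ t).2) z)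

/-!
With `κ = ρ·Im ω` and `E = ρ·Re ω`, the ansatz `(e^{κz}, ω e^{κz})` turns `D(ρ)ψ = Eψ` into the
two scalar identities `−iκ + ρω = E` and `ρ + iκω = Eω`; the first is `ω = Re ω + i Im ω`, the
second is `ω · conj ω = 1`. The mode decays because `κ < 0`, and `|Re ω| < 1 = |ω|` because
`Im ω ≠ 0`, which puts `E` in the gap `(−ρ, ρ)`.
-/

open Complex ComplexConjugate

lemma diracHalfLine_eq_of_hasDerivAt {ρ : ℝ} {ψ : ℝ → ℂ × ℂ} {z : ℝ} {d₁ d₂ : ℂ}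
    (h₁ : HasDerivAt (fun t => (ψ t).1) d₁ z) (h₂ : HasDerivAt (fun t => (ψ t).2) d₂ z) :
    diracHalfLine ρ ψ z = (-I * d₁ + ρ * (ψ z).2, ρ * (ψ z).1 + I * d₂) := by
  rw [diracHalfLine, h₁.deriv, h₂.deriv]

lemma hasDerivAt_cexp_ofReal_mul (c z : ℝ) :
    HasDerivAt (fun t : ℝ => cexp (c * t)) (c * cexp (c * z)) z := by
  simpa [mul_comm] using ((hasDerivAt_id (z : ℂ)).const_mul (c : ℂ)).cexp.comp_ofReal

noncomputable def diracExpMode (ρ : ℝ) (ω : ℂ) (z : ℝ) : ℂ × ℂ :=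
  (cexp ((ρ * ω.im : ℝ) * z), ω * cexp ((ρ * ω.im : ℝ) * z))

namespace diracExpMode

variable {ρ : ℝ} {ω : ℂ}

lemma apply_zero : diracExpMode ρ ω 0 = (1, ω) := by
  simp [diracExpMode]

lemma ne_zero (z : ℝ) : diracExpMode ρ ω z ≠ 0 :=
  fun h => exp_ne_zero _ (congrArg Prod.fst h)

lemma norm_apply (hω : ‖ω‖ = 1) (z : ℝ) : ‖diracExpMode ρ ω z‖ = Real.exp (ρ * ω.im * z) := by
  simp only [diracExpMode, Prod.norm_def, norm_mul, hω, one_mul, max_self, ← ofReal_mul,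
    norm_exp_ofReal]

lemma diracHalfLine_eq (hω : ‖ω‖ = 1) (z : ℝ) :
    diracHalfLine ρ (diracExpMode ρ ω) z = ((ρ * ω.re : ℝ) : ℂ) • diracExpMode ρ ω z := by
  have hd := hasDerivAt_cexp_ofReal_mul (ρ * ω.im) z
  have hconj : ω * ((ω.re : ℂ) - ω.im * I) = 1 :=
    calc ω * ((ω.re : ℂ) - ω.im * I) = ω * conj ω := by congr 1; apply Complex.ext <;> simp
      _ = 1 := by rw [mul_conj, normSq_eq_norm_sq, hω]; norm_num
  rw [diracHalfLine_eq_of_hasDerivAt hd (hd.const_mul ω)]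
  simp only [diracExpMode, Prod.smul_mk, smul_eq_mul]
  push_cast
  refine Prod.ext ?_ ?_
  · linear_combination (-(ρ : ℂ) * cexp (ρ * ω.im * z)) * re_add_im ω
  · linear_combination (-(ρ : ℂ) * cexp (ρ * ω.im * z)) * hconj

lemma integrableOn_sq_norm (hρ : 0 < ρ) (hω : ‖ω‖ = 1) (him : ω.im < 0) :
    IntegrableOn (fun z => ‖diracExpMode ρ ω z‖ ^ 2) (Set.Ici 0) := by
  have hsq (z : ℝ) : ‖diracExpMode ρ ω z‖ ^ 2 = Real.exp (2 * (ρ * ω.im) * z) := by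
    rw [norm_apply hω, sq, ← Real.exp_add]; ring_nf
  simp only [hsq]
  rw [integrableOn_Ici_iff_integrableOn_Ioi]
  exact integrableOn_exp_mul_Ioi (by nlinarith) 0

end diracExpMode

lemma mul_re_mem_Ioo_of_norm_eq_one {ρ : ℝ} {ω : ℂ} (hρ : 0 < ρ) (hω : ‖ω‖ = 1)
    (him : ω.im ≠ 0) : ρ * ω.re ∈ Set.Ioo (-ρ) ρ := by
  have hre : |ω.re| < 1 := hω ▸ abs_re_lt_norm.mpr him
  rw [abs_lt] at hre
  constructor <;> nlinarith

/-- For `ρ > 0` and a unitary boundary parameter `ω ∈ U(1)` with `Im ω < 0`, the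
explicit exponential `ψ(z) = (e^{ρ·Im(ω)·z}, ω·e^{ρ·Im(ω)·z})` is a nowhere-zero,
square-integrable solution of `D(ρ)ψ = ρ·Re(ω)·ψ` on `[0,∞)` with boundary value
`ψ(0) = (1, ω)`, and the eigenvalue `ρ·Re(ω)` lies in the gap `(−ρ, ρ)`. -/
theorem halfLineDirac_eigenfunction
    (ρ : ℝ) (hρ : 0 < ρ) (ω : ℂ) (hω : ‖ω‖ = 1) (him : ω.im < 0)
    (ψ : ℝ → ℂ × ℂ)
    (hψ : ∀ z : ℝ, ψ z =
      (Complex.exp ((ρ * ω.im : ℝ) * z), ω * Complex.exp ((ρ * ω.im : ℝ) * z))) :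
    (∀ z : ℝ, 0 ≤ z → diracHalfLine ρ ψ z = ((ρ * ω.re : ℝ) : ℂ) • ψ z) ∧
    ψ 0 = (1, ω) ∧
    IntegrableOn (fun z => ‖ψ z‖ ^ 2) (Set.Ici (0 : ℝ)) ∧
    (∀ z : ℝ, ψ z ≠ 0) ∧
    ρ * ω.re ∈ Set.Ioo (-ρ) ρ := by
  obtain rfl : ψ = diracExpMode ρ ω := funext hψ
  exact ⟨fun z _ => diracExpMode.diracHalfLine_eq hω z, diracExpMode.apply_zero,
    diracExpMode.integrableOn_sq_norm hρ hω him, diracExpMode.ne_zero,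
    mul_re_mem_Ioo_of_norm_eq_one hρ hω him.ne⟩
end

section
/- Let ρ > 0, let ω ∈ ℂ with |ω| = 1 and Im(ω) ≥ 0, and let λ ∈ ℝ with |λ| < ρ. If ψ = (ψ₁, ψ₂) : ℝ → ℂ × ℂ is differentiable, square-integrable on [0,∞), satisfies (D(ρ)ψ)(z) = λ·ψ(z) for all z ≥ 0, and ψ(0) = c·(1, ω) for some c ∈ ℂ, then ψ(z) = 0 for all z ≥ 0. -/
open MeasureTheory

open Set ComplexConjugate

/-! The current `j = Im(conj ψ₁ · ψ₂)` of an eigenfunction with eigenvalue `λ` satisfies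
`j' = ρ(|ψ₁|² + |ψ₂|²) − 2λ Re(conj ψ₁ · ψ₂) ≥ (ρ − |λ|)‖ψ‖² ≥ 0`, and the boundary condition
with `Im ω ≥ 0` gives `j(0) ≥ 0`. So `j` is nondecreasing and nonnegative on `[0, ∞)`; as
`|j| ≤ ‖ψ‖²` is integrable there, a positive value of `j` could not persist, so `j ≡ 0`.
Then `j' ≡ 0`, which forces `ψ ≡ 0`. -/

theorem MonotoneOn.nonpos_of_integrableOn_Ici {f : ℝ → ℝ} {a z : ℝ}
    (hf : MonotoneOn f (Ici a)) (hint : IntegrableOn f (Ici a)) (hz : a ≤ z) : f z ≤ 0 := by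
  by_contra! hpos
  have hconst : IntegrableOn (fun _ => f z) (Ici z) := by
    refine (hint.mono_set (Ici_subset_Ici.2 hz)).mono' aestronglyMeasurable_const ?_
    filter_upwards [ae_restrict_mem measurableSet_Ici] with t ht
    rw [Real.norm_eq_abs, abs_of_pos hpos]
    exact hf hz (hz.trans ht) ht
  simp [integrableOn_const_iff, hpos.ne'] at hconst

theorem hasDerivAt_eq_zero_of_nonneg_of_integrableOn_Ici {s s' : ℝ → ℝ} {a : ℝ}
    (hs : ∀ z, a ≤ z → HasDerivAt s (s' z) z) (hs' : ∀ z, a ≤ z → 0 ≤ s' z)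
    (ha : 0 ≤ s a) (hint : IntegrableOn s (Ici a)) {z : ℝ} (hz : a ≤ z) : s' z = 0 := by
  have hmono : MonotoneOn s (Ici a) :=
    monotoneOn_of_hasDerivWithinAt_nonneg (convex_Ici a)
      (fun x hx => (hs x hx).continuousAt.continuousWithinAt)
      (fun x hx => (hs x (interior_subset hx)).hasDerivWithinAt)
      (fun x hx => hs' x (interior_subset hx))
  have hzero : ∀ t, a ≤ t → s t = 0 := fun t ht =>
    le_antisymm (hmono.nonpos_of_integrableOn_Ici hint ht) (ha.trans (hmono self_mem_Ici ht ht))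
  have hconst : HasDerivWithinAt s 0 (Ici z) z :=
    (hasDerivWithinAt_const z (Ici z) (0 : ℝ)).congr (fun t ht => hzero t (hz.trans ht))
      (hzero z hz)
  exact (uniqueDiffWithinAt_Ici z).eq_deriv _ (hs z hz).hasDerivWithinAt hconst

def diracCurrent (x : ℂ × ℂ) : ℝ := (conj x.1 * x.2).im

theorem continuous_diracCurrent : Continuous diracCurrent := by
  unfold diracCurrent
  fun_prop

theorem abs_diracCurrent_le (x : ℂ × ℂ) : |diracCurrent x| ≤ ‖x‖ ^ 2 := by
  calc |diracCurrent x| ≤ ‖conj x.1 * x.2‖ := Complex.abs_im_le_norm _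
    _ = ‖x.1‖ * ‖x.2‖ := by rw [norm_mul, Complex.norm_conj]
    _ ≤ ‖x‖ * ‖x‖ := mul_le_mul (norm_fst_le x) (norm_snd_le x) (norm_nonneg _) (norm_nonneg _)
    _ = ‖x‖ ^ 2 := (sq _).symm

theorem diracCurrent_smul_nonneg {ω : ℂ} (hω : 0 ≤ ω.im) (c : ℂ) :
    0 ≤ diracCurrent (c • ((1 : ℂ), ω)) := by
  have hconj : conj c * (c * ω) = (Complex.normSq c : ℂ) * ω := by
    rw [← mul_assoc, mul_comm (conj c) c, Complex.mul_conj]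
  rw [diracCurrent, Prod.smul_mk, smul_eq_mul, smul_eq_mul, mul_one, hconj,
    Complex.im_ofReal_mul]
  exact mul_nonneg (Complex.normSq_nonneg c) hω

theorem hasDerivAt_of_diracHalfLine_eq {ρ lam z : ℝ} {ψ : ℝ → ℂ × ℂ}
    (hψ : DifferentiableAt ℝ ψ z) (h : diracHalfLine ρ ψ z = (lam : ℂ) • ψ z) :
    HasDerivAt (fun t => (ψ t).1) (Complex.I * (lam * (ψ z).1 - ρ * (ψ z).2)) z ∧
      HasDerivAt (fun t => (ψ t).2) (Complex.I * (ρ * (ψ z).1 - lam * (ψ z).2)) z := by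
  obtain ⟨h₁, h₂⟩ := Prod.ext_iff.1 h
  simp only [diracHalfLine, Prod.smul_fst, Prod.smul_snd, smul_eq_mul] at h₁ h₂
  constructor
  · refine hψ.fst.hasDerivAt.congr_deriv ?_
    linear_combination Complex.I * h₁ + deriv (fun t => (ψ t).1) z * Complex.I_sq
  · refine hψ.snd.hasDerivAt.congr_deriv ?_
    linear_combination -Complex.I * h₂ + deriv (fun t => (ψ t).2) z * Complex.I_sq

theorem hasDerivAt_diracCurrent {ρ lam z : ℝ} {ψ : ℝ → ℂ × ℂ}
    (hψ : DifferentiableAt ℝ ψ z) (h : diracHalfLine ρ ψ z = (lam : ℂ) • ψ z) :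
    HasDerivAt (fun t => diracCurrent (ψ t))
      (ρ * (‖(ψ z).1‖ ^ 2 + ‖(ψ z).2‖ ^ 2) - 2 * lam * (conj (ψ z).1 * (ψ z).2).re) z := by
  obtain ⟨h₁, h₂⟩ := hasDerivAt_of_diracHalfLine_eq hψ h
  refine (Complex.imCLM.hasFDerivAt.comp_hasDerivAt z (h₁.star.mul h₂)).congr_deriv ?_
  simp only [Complex.imCLM_apply, ← Complex.normSq_eq_norm_sq, Complex.normSq_apply,
    Complex.add_im, Complex.mul_im, Complex.mul_re, Complex.sub_re, Complex.sub_im,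
    Complex.I_re, Complex.I_im, Complex.ofReal_re, Complex.ofReal_im,
    Complex.star_def, Complex.conj_re, Complex.conj_im]
  ring

theorem sub_abs_mul_sq_norm_le {ρ lam : ℝ} (h : |lam| ≤ ρ) (x : ℂ × ℂ) :
    (ρ - |lam|) * ‖x‖ ^ 2 ≤ ρ * (‖x.1‖ ^ 2 + ‖x.2‖ ^ 2) - 2 * lam * (conj x.1 * x.2).re := by
  have hre : |lam * (conj x.1 * x.2).re| ≤ |lam| * (‖x.1‖ * ‖x.2‖) := by
    rw [abs_mul]
    gcongr
    exact (Complex.abs_re_le_norm _).trans (by rw [norm_mul, Complex.norm_conj])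
  have hsq : ‖x‖ ^ 2 ≤ ‖x.1‖ ^ 2 + ‖x.2‖ ^ 2 := by
    rcases max_choice ‖x.1‖ ‖x.2‖ with hmax | hmax <;> rw [Prod.norm_def, hmax] <;> nlinarith
  nlinarith [le_abs_self (lam * (conj x.1 * x.2).re), two_mul_le_add_sq ‖x.1‖ ‖x.2‖, abs_nonneg lam]

theorem halfLineDirac_no_eigenvalue_upper_general
    (ρ : ℝ) (ω : ℂ) (him : 0 ≤ ω.im)
    (lam : ℝ) (hlam : |lam| < ρ)
    (ψ : ℝ → ℂ × ℂ) (hdiff : Differentiable ℝ ψ)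
    (hL2 : IntegrableOn (fun z => ‖ψ z‖ ^ 2) (Set.Ici (0 : ℝ)))
    (heig : ∀ z : ℝ, 0 ≤ z → diracHalfLine ρ ψ z = ((lam : ℝ) : ℂ) • ψ z)
    (hbc : ∃ c : ℂ, ψ 0 = c • ((1 : ℂ), ω)) :
    ∀ z : ℝ, 0 ≤ z → ψ z = 0 := by
  obtain ⟨c, hc⟩ := hbc
  have hcurrent := fun z (hz : 0 ≤ z) => hasDerivAt_diracCurrent (hdiff z) (heig z hz)
  have hbound := fun t => sub_abs_mul_sq_norm_le hlam.le (ψ t)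
  have hgap : 0 < ρ - |lam| := sub_pos.2 hlam
  have hint : IntegrableOn (fun t => diracCurrent (ψ t)) (Ici 0) :=
    hL2.mono' (continuous_diracCurrent.comp hdiff.continuous).aestronglyMeasurable
      (ae_of_all _ fun t => abs_diracCurrent_le (ψ t))
  intro z hz
  have hderiv_zero := hasDerivAt_eq_zero_of_nonneg_of_integrableOn_Ici hcurrent
    (fun t _ => (mul_nonneg hgap.le (sq_nonneg _)).trans (hbound t))
    (hc ▸ diracCurrent_smul_nonneg him c) hint hz
  have hnorm : (ρ - |lam|) * ‖ψ z‖ ^ 2 ≤ 0 := hderiv_zero ▸ hbound z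
  simpa using nonpos_of_mul_nonpos_right hnorm hgap

/-- For a boundary parameter `ω ∈ U(1)` with `Im ω ≥ 0`, the half-line Dirac operator
with mass `ρ > 0` and boundary condition `ψ(0) ∝ (1, ω)` has no eigenvalue in the
essential spectral gap `(−ρ, ρ)`: any square-integrable differentiable solution of the
eigenvalue equation vanishes identically on `[0,∞)`. -/
theorem halfLineDirac_no_eigenvalue_upper
    (ρ : ℝ) (hρ : 0 < ρ) (ω : ℂ) (hω : ‖ω‖ = 1) (him : 0 ≤ ω.im)
    (lam : ℝ) (hlam : |lam| < ρ)
    (ψ : ℝ → ℂ × ℂ) (hdiff : Differentiable ℝ ψ)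
    (hL2 : IntegrableOn (fun z => ‖ψ z‖ ^ 2) (Set.Ici (0 : ℝ)))
    (heig : ∀ z : ℝ, 0 ≤ z → diracHalfLine ρ ψ z = ((lam : ℝ) : ℂ) • ψ z)
    (hbc : ∃ c : ℂ, ψ 0 = c • ((1 : ℂ), ω)) :
    ∀ z : ℝ, 0 ≤ z → ψ z = 0 :=
  halfLineDirac_no_eigenvalue_upper_general ρ ω him lam hlam ψ hdiff hL2 heig hbc
end

section
/- Let q = q_r·1₂ + i(q⃗·σ) ∈ SU(2) with |q_r| < 1 (equivalently q⃗ ≠ 0). Then there exists a nonzero vector u ∈ ℂ² with (q⃗·σ)u = −|q⃗|·u, and for any such u the function ψ : ℝ → ℂ² × ℂ², ψ(z) = (u·e^{−|q⃗|·z}, (q u)·e^{−|q⃗|·z}), satisfies (D̸ψ)(z) = q_r·ψ(z) for all z ≥ 0, obeys the boundary condition ψ(0) = (u, qu), is square-integrable on [0,∞), is not identically zero, and the eigenvalue q_r lies in (−1, 1). -/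
open MeasureTheory

/-- The Pauli matrices `σ₁, σ₂, σ₃`. -/
noncomputable def pauli1 : Matrix (Fin 2) (Fin 2) ℂ := !![0, 1; 1, 0]
noncomputable def pauli2 : Matrix (Fin 2) (Fin 2) ℂ := !![0, -Complex.I; Complex.I, 0]
noncomputable def pauli3 : Matrix (Fin 2) (Fin 2) ℂ := !![1, 0; 0, -1]

/-- `q⃗·σ = q₁σ₁ + q₂σ₂ + q₃σ₃` for `q⃗ = (q₁,q₂,q₃) ∈ ℝ³`. -/
noncomputable def pauliVec (q1 q2 q3 : ℝ) : Matrix (Fin 2) (Fin 2) ℂ :=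
  (q1 : ℂ) • pauli1 + (q2 : ℂ) • pauli2 + (q3 : ℂ) • pauli3

/-- The formal quaternionic half-line Dirac operator with mass `1`, acting on
differentiable functions `ψ = (φ, χ) : ℝ → ℂ² × ℂ²` by
`(D̸ψ)(z) = (−i·φ′(z) + χ(z), φ(z) + i·χ′(z))`. -/
noncomputable def diracQ (ψ : ℝ → (Fin 2 → ℂ) × (Fin 2 → ℂ)) (z : ℝ) :
    (Fin 2 → ℂ) × (Fin 2 → ℂ) :=
  ((-Complex.I) • deriv (fun t => (ψ t).1) z + (ψ z).2,
   (ψ z).1 + Complex.I • deriv (fun t => (ψ t).2) z)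

/-!
Since `(q⃗·σ)² = |q⃗|²`, every column of `q⃗·σ - |q⃗|` is a `-|q⃗|`-eigenvector of `q⃗·σ`, and some
column is nonzero because this matrix has trace `-2|q⃗| ≠ 0`. On such a `u` the matrix `q` acts
as the scalar `q_r - i|q⃗|`, so `ψ` is a scalar exponential times a fixed vector and `D̸ψ = q_r ψ`
reduces to two scalar identities, which hold because `|q⃗|² = 1 - q_r²`. The decay rate
`|q⃗| > 0` makes `ψ` square-integrable.
-/

open Complex Matrix

lemma pauliVec_mul_self (q1 q2 q3 : ℝ) :
    pauliVec q1 q2 q3 * pauliVec q1 q2 q3 = ((q1 ^ 2 + q2 ^ 2 + q3 ^ 2 : ℝ) : ℂ) • 1 := by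
  ext i j
  fin_cases i <;> fin_cases j <;>
    simp [pauliVec, pauli1, pauli2, pauli3, Matrix.mul_apply, Fin.sum_univ_two] <;> ring_nf <;>
    simp [I_sq]

lemma trace_pauliVec (q1 q2 q3 : ℝ) : (pauliVec q1 q2 q3).trace = 0 := by
  simp [pauliVec, pauli1, pauli2, pauli3, Matrix.trace_fin_two]

lemma pauliVec_mulVec_sub_smul_mulVec (q1 q2 q3 m : ℝ) (hm : m ^ 2 = q1 ^ 2 + q2 ^ 2 + q3 ^ 2)
    (v : Fin 2 → ℂ) :
    pauliVec q1 q2 q3 *ᵥ ((pauliVec q1 q2 q3 - (m : ℂ) • 1) *ᵥ v)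
      = (-(m : ℂ)) • ((pauliVec q1 q2 q3 - (m : ℂ) • 1) *ᵥ v) := by
  rw [mulVec_mulVec, Matrix.mul_sub, pauliVec_mul_self, ← hm, Matrix.mul_smul, Matrix.mul_one,
    ← smul_mulVec]
  congr 1
  push_cast
  module

lemma exists_ne_zero_pauliVec_mulVec_eq_neg_smul (q1 q2 q3 m : ℝ) (hm0 : 0 < m)
    (hm : m ^ 2 = q1 ^ 2 + q2 ^ 2 + q3 ^ 2) :
    ∃ u : Fin 2 → ℂ, u ≠ 0 ∧ pauliVec q1 q2 q3 *ᵥ u = (-(m : ℂ)) • u := by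
  set A := pauliVec q1 q2 q3 - (m : ℂ) • 1
  have hA : A ≠ 0 := fun h => by
    have := congrArg Matrix.trace h
    simp [A, trace_pauliVec] at this
    exact hm0.ne' (by exact_mod_cast this)
  obtain ⟨i, hi⟩ : ∃ i, A *ᵥ Pi.single i 1 ≠ 0 := by
    by_contra! h
    exact hA (ext_of_mulVec_single fun i => by rw [h, zero_mulVec])
  exact ⟨_, hi, pauliVec_mulVec_sub_smul_mulVec q1 q2 q3 m hm _⟩

lemma mulVec_eq_smul_of_pauliVec_mulVec {q : Matrix (Fin 2) (Fin 2) ℂ} {qr q1 q2 q3 m : ℝ}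
    (hq : q = (qr : ℂ) • 1 + I • pauliVec q1 q2 q3) {u : Fin 2 → ℂ}
    (hu : pauliVec q1 q2 q3 *ᵥ u = (-(m : ℂ)) • u) :
    q *ᵥ u = ((qr : ℂ) - I * m) • u := by
  rw [hq, add_mulVec, smul_mulVec, smul_mulVec, one_mulVec, hu, smul_smul, ← add_smul]
  ring_nf

lemma hasDerivAt_cexp_mul_ofReal_smul {E : Type*} [NormedAddCommGroup E] [NormedSpace ℂ E]
    (κ : ℂ) (w : E) (z : ℝ) :
    HasDerivAt (fun t : ℝ => exp (κ * t) • w) ((κ * exp (κ * z)) • w) z := by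
  have h : HasDerivAt (fun s : ℂ => exp (κ * s)) (κ * exp (κ * z)) z := by
    simpa [mul_comm] using ((hasDerivAt_id (z : ℂ)).const_mul κ).cexp
  exact h.comp_ofReal.smul_const w

lemma diracQ_exp_smul (κ : ℂ) (a b : Fin 2 → ℂ) (z : ℝ) :
    diracQ (fun t => (exp (κ * t) • a, exp (κ * t) • b)) z
      = exp (κ * z) • ((-I * κ) • a + b, a + (I * κ) • b) := by
  simp only [diracQ, (hasDerivAt_cexp_mul_ofReal_smul κ a z).deriv,
    (hasDerivAt_cexp_mul_ofReal_smul κ b z).deriv, Prod.smul_mk, smul_add, smul_smul]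
  congr 2 <;> ring_nf

lemma integrableOn_norm_cexp_mul_smul_sq {E : Type*} [NormedAddCommGroup E] [NormedSpace ℂ E]
    {κ : ℂ} (hκ : κ.re < 0) (w : E) :
    IntegrableOn (fun z : ℝ => ‖exp (κ * z) • w‖ ^ 2) (Set.Ici 0) := by
  have h : IntegrableOn (fun z : ℝ => ‖w‖ ^ 2 * ‖exp (2 * κ * z)‖) (Set.Ioi 0) :=
    (integrableOn_exp_mul_complex_Ioi (by simp; linarith) 0).norm.const_mul _
  rw [integrableOn_Ici_iff_integrableOn_Ioi]
  refine h.congr_fun (fun z _ => ?_) measurableSet_Ioi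
  rw [norm_smul, mul_pow, mul_comm, ← norm_pow, ← Complex.exp_nat_mul]
  push_cast; ring_nf

lemma diracQ_exp_smul_eq_smul (qr m : ℝ) (hm : m ^ 2 = 1 - qr ^ 2) (a : Fin 2 → ℂ) (z : ℝ) :
    diracQ (fun t => (exp (-m * t) • a, exp (-m * t) • (((qr : ℂ) - I * m) • a))) z
      = (qr : ℂ) • (exp (-m * z) • a, exp (-m * z) • (((qr : ℂ) - I * m) • a)) := by
  have hm' : (m : ℂ) ^ 2 = 1 - (qr : ℂ) ^ 2 := by exact_mod_cast hm
  rw [diracQ_exp_smul, Prod.smul_mk, Prod.smul_mk]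
  refine Prod.ext ?_ ?_
  · simp only [smul_smul, ← add_smul]
    congr 1
    ring
  · simp only [smul_smul]
    linear_combination (norm := module)
      (exp (-m * z) * m ^ 2 * I_sq - exp (-m * z) * hm') • a

/-- Let `q = q_r·1₂ + i(q⃗·σ) ∈ SU(2)` with `|q_r| < 1`.  Then there is a nonzero
`u ∈ ℂ²` with `(q⃗·σ)u = −|q⃗|·u`, and for any such `u` the exponential
`ψ(z) = (u·e^{−|q⃗|z}, (qu)·e^{−|q⃗|z})` is a square-integrable, not identically zero
eigenfunction of the quaternionic half-line Dirac operator with eigenvalue `q_r`,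
obeying the boundary condition `ψ(0) = (u, qu)`; moreover `q_r ∈ (−1, 1)`. -/
theorem quaternionicDirac_eigenfunction
    (q : Matrix (Fin 2) (Fin 2) ℂ) (qr q1 q2 q3 : ℝ)
    (hq : q = (qr : ℂ) • (1 : Matrix (Fin 2) (Fin 2) ℂ) + Complex.I • pauliVec q1 q2 q3)
    (hnorm : qr ^ 2 + (q1 ^ 2 + q2 ^ 2 + q3 ^ 2) = 1)
    (hqr : |qr| < 1) :
    (∃ u : Fin 2 → ℂ, u ≠ 0 ∧
        (pauliVec q1 q2 q3).mulVec u
          = (-(Real.sqrt (q1 ^ 2 + q2 ^ 2 + q3 ^ 2)) : ℂ) • u) ∧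
    (∀ u : Fin 2 → ℂ, u ≠ 0 →
      (pauliVec q1 q2 q3).mulVec u
          = (-(Real.sqrt (q1 ^ 2 + q2 ^ 2 + q3 ^ 2)) : ℂ) • u →
      ∀ ψ : ℝ → (Fin 2 → ℂ) × (Fin 2 → ℂ),
        (∀ z : ℝ, ψ z =
          (Complex.exp ((-(Real.sqrt (q1 ^ 2 + q2 ^ 2 + q3 ^ 2)) : ℂ) * (z : ℂ)) • u,
           Complex.exp ((-(Real.sqrt (q1 ^ 2 + q2 ^ 2 + q3 ^ 2)) : ℂ) * (z : ℂ)) •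
             q.mulVec u)) →
        (∀ z : ℝ, 0 ≤ z → diracQ ψ z = (qr : ℂ) • ψ z) ∧
        ψ 0 = (u, q.mulVec u) ∧
        IntegrableOn (fun z => ‖ψ z‖ ^ 2) (Set.Ici (0 : ℝ)) ∧
        ψ ≠ 0) ∧
    qr ∈ Set.Ioo (-1 : ℝ) 1 := by
  obtain ⟨hqr_lo, hqr_hi⟩ := abs_lt.mp hqr
  have hs : 0 < q1 ^ 2 + q2 ^ 2 + q3 ^ 2 := by nlinarith
  set m := Real.sqrt (q1 ^ 2 + q2 ^ 2 + q3 ^ 2)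
  have hm0 : 0 < m := Real.sqrt_pos.mpr hs
  have hm : m ^ 2 = q1 ^ 2 + q2 ^ 2 + q3 ^ 2 := Real.sq_sqrt hs.le
  refine ⟨exists_ne_zero_pauliVec_mulVec_eq_neg_smul q1 q2 q3 m hm0 hm,
    fun u hu0 hu ψ hψ => ?_, hqr_lo, hqr_hi⟩
  obtain rfl : ψ = _ := funext hψ
  refine ⟨fun z _ => ?_, by simp, ?_, fun h => hu0 ?_⟩
  · rw [mulVec_eq_smul_of_pauliVec_mulVec hq hu]
    exact diracQ_exp_smul_eq_smul qr m (by linarith) u z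
  · simpa only [Prod.smul_mk] using
      integrableOn_norm_cexp_mul_smul_sq (κ := -m) (by simpa using hm0) (u, q *ᵥ u)
  · simpa using congrArg Prod.fst (congrFun h 0)
end

section
/- Let q = 1₂ or q = −1₂, and let λ ∈ ℝ with |λ| < 1. If ψ : ℝ → ℂ² × ℂ² is differentiable, square-integrable on [0,∞), satisfies (D̸ψ)(z) = λ·ψ(z) for all z ≥ 0, and obeys the boundary condition ψ(0) = (u, qu) for some u ∈ ℂ², then ψ(z) = 0 for all z ≥ 0. In other words, for q = ±1₂ the quaternionic half-line Dirac operator with boundary condition q has no eigenvalue in the gap (−1, 1). -/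
/-!
On the gap `|λ| < 1` put `μ = √(1 - λ²) > 0`. The eigenvalue equation decouples into the modes
`φ - (λ ± iμ) χ`, which satisfy `s' = ±μ s` and are therefore `e^{±μz}` times their value at `0`.
The norm of the growing mode never drops below its initial value, so square-integrability forces
that value to vanish. As `λ + iμ` is not real, the real boundary condition `χ(0) = ±φ(0)` then
gives `ψ(0) = 0`, after which both modes, and hence `ψ`, vanish on `[0, ∞)`.
-/

open MeasureTheory

open Complex Set

section HalfLine

variable {E : Type*} [NormedAddCommGroup E] [NormedSpace ℂ E]

theorem eq_cexp_smul_of_hasDerivAt {h : ℝ → E} {c : ℂ}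
    (hh : ∀ x, 0 ≤ x → HasDerivAt h (c • h x) x) {z : ℝ} (hz : 0 ≤ z) :
    h z = exp (c * z) • h 0 := by
  have hderiv : ∀ x, 0 ≤ x →
      HasDerivAt (fun x : ℝ => exp (-c * x) • h x) 0 x := by
    intro x hx
    have hexp : HasDerivAt (fun x : ℝ => exp (-c * x)) (exp (-c * x) * -c) x := by
      simpa using ((ofRealCLM.hasDerivAt (x := x)).const_mul (-c)).cexp
    refine (hexp.smul (hh x hx)).congr_deriv ?_
    rw [smul_smul, ← add_smul, mul_neg, add_neg_cancel, zero_smul]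
  have hconst := constant_of_has_deriv_right_zero (f := fun x : ℝ => exp (-c * x) • h x)
    (fun x hx => (hderiv x hx.1).continuousAt.continuousWithinAt)
    (fun x hx => (hderiv x hx.1).hasDerivWithinAt) z ⟨hz, le_rfl⟩
  simp only [ofReal_zero, mul_zero, exp_zero, one_smul] at hconst
  rw [← hconst, smul_smul, ← exp_add, neg_mul, add_neg_cancel, exp_zero, one_smul]

theorem eq_zero_at_zero_of_hasDerivAt_smul_of_memLp {s : ℝ → E} {κ : ℝ} (hκ : 0 ≤ κ)
    (hs : ∀ z, 0 ≤ z → HasDerivAt s ((κ : ℂ) • s z) z)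
    (hL2 : MemLp s 2 (volume.restrict (Ici 0))) : s 0 = 0 := by
  have hgrow : ∀ z ∈ Ici (0 : ℝ), ‖s 0‖ ≤ ‖s z‖ := fun z hz => by
    rw [eq_cexp_smul_of_hasDerivAt hs hz, norm_smul, norm_exp, ← ofReal_mul, ofReal_re]
    exact le_mul_of_one_le_left (norm_nonneg _) (Real.one_le_exp (mul_nonneg hκ hz))
  have hconst : MemLp (fun _ : ℝ => s 0) 2 (volume.restrict (Ici 0)) :=
    hL2.of_le aestronglyMeasurable_const (ae_restrict_of_forall_mem measurableSet_Ici hgrow)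
  simpa [memLp_const_iff, Real.volume_Ici] using hconst

theorem exists_pos_sq_add_sq_eq_one {lam : ℝ} (hlam : |lam| < 1) :
    ∃ μ : ℝ, 0 < μ ∧ μ ^ 2 + lam ^ 2 = 1 := by
  have hlam2 : lam ^ 2 < 1 := by simpa using sq_lt_sq' (abs_lt.1 hlam).1 (abs_lt.1 hlam).2
  refine ⟨√(1 - lam ^ 2), Real.sqrt_pos.2 (by linarith), ?_⟩
  rw [Real.sq_sqrt (by linarith)]
  ring

section DiracSystem

variable {lam : ℝ} {φ χ : ℝ → E}
  (hφ : ∀ z, 0 ≤ z → HasDerivAt φ (I • ((lam : ℂ) • φ z - χ z)) z)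
  (hχ : ∀ z, 0 ≤ z → HasDerivAt χ (I • (φ z - (lam : ℂ) • χ z)) z)
include hφ hχ

theorem hasDerivAt_sub_smul_of_sq_add_sq_eq_one {σ : ℝ} (hσ : σ ^ 2 + lam ^ 2 = 1) {z : ℝ}
    (hz : 0 ≤ z) :
    HasDerivAt (fun z => φ z - ((lam : ℂ) + σ * I) • χ z)
      ((σ : ℂ) • (φ z - ((lam : ℂ) + σ * I) • χ z)) z := by
  refine ((hφ z hz).sub ((hχ z hz).const_smul _)).congr_deriv ?_
  have hσ' : (σ : ℂ) ^ 2 + (lam : ℂ) ^ 2 = 1 := by exact_mod_cast hσ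
  linear_combination (norm := module)
    hσ' • (I • χ z) - I_sq • ((σ : ℂ) • φ z) + I_sq • ((lam * σ : ℂ) • χ z)

theorem eq_zero_of_eq_zero_at_zero (hlam : |lam| < 1) (hφ0 : φ 0 = 0) (hχ0 : χ 0 = 0) {z : ℝ}
    (hz : 0 ≤ z) : φ z = 0 ∧ χ z = 0 := by
  obtain ⟨μ, hμ, hμlam⟩ := exists_pos_sq_add_sq_eq_one hlam
  have hmode : ∀ σ : ℝ, σ ^ 2 + lam ^ 2 = 1 → φ z - ((lam : ℂ) + σ * I) • χ z = 0 :=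
    fun σ hσ => by
      simpa [hφ0, hχ0] using eq_cexp_smul_of_hasDerivAt
        (fun x hx => hasDerivAt_sub_smul_of_sq_add_sq_eq_one hφ hχ hσ hx) hz
  have hplus := hmode μ hμlam
  have hminus := hmode (-μ) (by rwa [neg_sq])
  have hχz : χ z = 0 := by
    have h : ((2 * μ : ℂ) * I) • χ z = 0 := by
      linear_combination (norm := module) hminus - hplus
    exact (smul_eq_zero.1 h).resolve_left (by simp [hμ.ne'])
  exact ⟨by simpa [hχz] using hplus, hχz⟩

theorem eq_zero_of_memLp_of_eq_ofReal_smul (hlam : |lam| < 1)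
    (hφL2 : MemLp φ 2 (volume.restrict (Ici 0))) (hχL2 : MemLp χ 2 (volume.restrict (Ici 0)))
    {ε : ℝ} (hbc : χ 0 = (ε : ℂ) • φ 0) {z : ℝ} (hz : 0 ≤ z) : φ z = 0 ∧ χ z = 0 := by
  obtain ⟨μ, hμ, hμlam⟩ := exists_pos_sq_add_sq_eq_one hlam
  have hs0 : φ 0 - ((lam : ℂ) + μ * I) • χ 0 = 0 :=
    eq_zero_at_zero_of_hasDerivAt_smul_of_memLp hμ.le
      (fun x hx => hasDerivAt_sub_smul_of_sq_add_sq_eq_one hφ hχ hμlam hx)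
      (hφL2.sub (hχL2.const_smul _))
  have hcoef : (1 : ℂ) - ((lam : ℂ) + μ * I) * ε ≠ 0 := by
    intro h
    have him : μ * ε = 0 := by simpa using congrArg im h
    simp [(mul_eq_zero.1 him).resolve_left hμ.ne'] at h
  have hφ0 : φ 0 = 0 := by
    have h : ((1 : ℂ) - ((lam : ℂ) + μ * I) * ε) • φ 0 = 0 := by
      rw [hbc] at hs0
      linear_combination (norm := module) hs0
    exact (smul_eq_zero.1 h).resolve_left hcoef
  exact eq_zero_of_eq_zero_at_zero hφ hχ hlam hφ0 (by simp [hbc, hφ0]) hz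

end DiracSystem

end HalfLine

theorem hasDerivAt_of_diracQ_eq_smul {ψ : ℝ → (Fin 2 → ℂ) × (Fin 2 → ℂ)}
    (hdiff : Differentiable ℝ ψ) {lam : ℝ} {z : ℝ} (heig : diracQ ψ z = (lam : ℂ) • ψ z) :
    HasDerivAt (fun t => (ψ t).1) (I • ((lam : ℂ) • (ψ z).1 - (ψ z).2)) z ∧
      HasDerivAt (fun t => (ψ t).2) (I • ((ψ z).1 - (lam : ℂ) • (ψ z).2)) z := by
  obtain ⟨h1, h2⟩ := Prod.ext_iff.1 heig
  simp only [diracQ, Prod.smul_fst, Prod.smul_snd] at h1 h2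
  refine ⟨(hdiff.fst z).hasDerivAt.congr_deriv ?_, (hdiff.snd z).hasDerivAt.congr_deriv ?_⟩
  · linear_combination (norm := module) I • h1 + I_sq • deriv (fun t => (ψ t).1) z
  · linear_combination (norm := module) -I • h2 + I_sq • deriv (fun t => (ψ t).2) z

/-- For boundary condition `q = 1₂` or `q = −1₂`, the quaternionic half-line Dirac
operator has no eigenvalue in the gap `(−1, 1)`: any differentiable, square-integrable
solution of `D̸ψ = λ·ψ` on `[0,∞)` with `|λ| < 1` and `ψ(0) = (u, qu)` vanishes
identically on `[0,∞)`. -/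
theorem quaternionicDirac_no_eigenvalue_real_bc
    (q : Matrix (Fin 2) (Fin 2) ℂ)
    (hq : q = (1 : Matrix (Fin 2) (Fin 2) ℂ) ∨ q = -(1 : Matrix (Fin 2) (Fin 2) ℂ))
    (lam : ℝ) (hlam : |lam| < 1)
    (ψ : ℝ → (Fin 2 → ℂ) × (Fin 2 → ℂ)) (hdiff : Differentiable ℝ ψ)
    (hL2 : IntegrableOn (fun z => ‖ψ z‖ ^ 2) (Set.Ici (0 : ℝ)))
    (heig : ∀ z : ℝ, 0 ≤ z → diracQ ψ z = (lam : ℂ) • ψ z)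
    (hbc : ∃ u : Fin 2 → ℂ, ψ 0 = (u, q.mulVec u)) :
    ∀ z : ℝ, 0 ≤ z → ψ z = 0 := by
  obtain ⟨u, hu⟩ := hbc
  obtain ⟨ε, hε⟩ : ∃ ε : ℝ, (ψ 0).2 = (ε : ℂ) • (ψ 0).1 := by
    rcases hq with rfl | rfl
    · exact ⟨1, by simp [hu]⟩
    · exact ⟨-1, by simp [hu, Matrix.neg_mulVec]⟩
  have hmem : MemLp ψ 2 (volume.restrict (Ici 0)) :=
    (memLp_two_iff_integrable_sq_norm hdiff.continuous.aestronglyMeasurable).2 hL2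
  have hsys := fun z hz => hasDerivAt_of_diracQ_eq_smul hdiff (heig z hz)
  intro z hz
  obtain ⟨hφz, hχz⟩ := eq_zero_of_memLp_of_eq_ofReal_smul (fun z hz => (hsys z hz).1)
    (fun z hz => (hsys z hz).2) hlam hmem.fst hmem.snd hε hz
  exact Prod.ext hφz hχz
end

section
/- For every λ ∈ ℝ with |λ| < 1 there exist q ∈ SU(2) whose scalar part equals λ, a nonzero vector u ∈ ℂ², and a differentiable function ψ : ℝ → ℂ² × ℂ², not identically zero and square-integrable on [0,∞), such that ψ(0) = (u, qu) and (D̸ψ)(z) = λ·ψ(z) for all z ≥ 0. That is, the family {D̸(q)}_{q ∈ SU(2)} of quaternionic half-line Dirac operators has the gap-filling property: every point of the common essential spectral gap (−1,1) is attained as an eigenvalue for some boundary condition q. -/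
open MeasureTheory

/-! With `κ = √(1 - λ²) > 0` and the unit complex number `c = λ - iκ`, the decaying exponential
`ψ(z) = e^{-κz} (u, c u)` solves `D̸ψ = λψ`, because `iκ + c = λ` and `1 - iκc = λc`. The boundary
matrix `q = λ + i(-κ)σ₃ = diag(c, c̄)` has scalar part `λ` and maps `u = e₁` to `c u`. -/

open Complex

section ExpDecay

variable {E : Type*} [NormedAddCommGroup E] [NormedSpace ℂ E]

noncomputable def expDecay (κ : ℝ) (v : E) (t : ℝ) : E := (Real.exp (-κ * t) : ℂ) • v

theorem expDecay_zero (κ : ℝ) (v : E) : expDecay κ v 0 = v := by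
  simp [expDecay]

theorem hasDerivAt_expDecay (κ : ℝ) (v : E) (t : ℝ) :
    HasDerivAt (expDecay κ v) ((-κ : ℂ) • expDecay κ v t) t := by
  have h := (((hasDerivAt_id' t).const_mul (-κ)).exp.ofReal_comp).smul_const v
  refine h.congr_deriv ?_
  rw [expDecay, smul_smul]
  push_cast
  ring_nf

theorem differentiable_expDecay (κ : ℝ) (v : E) : Differentiable ℝ (expDecay κ v) :=
  fun t => (hasDerivAt_expDecay κ v t).differentiableAt

theorem integrableOn_Ici_norm_sq_expDecay {κ : ℝ} (hκ : 0 < κ) (v : E) :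
    IntegrableOn (fun t => ‖expDecay κ v t‖ ^ 2) (Set.Ici 0) := by
  have h := (exp_neg_integrableOn_Ioi 0 (mul_pos two_pos hκ)).mul_const (‖v‖ ^ 2)
  refine ((integrableOn_Ici_iff_integrableOn_Ioi).mpr h).congr_fun (fun t _ => ?_) measurableSet_Ici
  rw [expDecay, norm_smul, mul_pow, Complex.norm_real, Real.norm_of_nonneg (Real.exp_pos _).le,
    ← Real.exp_nat_mul]
  ring_nf

end ExpDecay

theorem diracQ_expDecay_eq_smul {κ : ℝ} {lam : ℂ} {a b : Fin 2 → ℂ}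
    (h₁ : (I * κ) • a + b = lam • a) (h₂ : a - (I * κ) • b = lam • b) (z : ℝ) :
    diracQ (expDecay κ (a, b)) z = lam • expDecay κ (a, b) z := by
  have ha : deriv (fun t => (expDecay κ (a, b) t).1) z = (-κ : ℂ) • expDecay κ a z :=
    (hasDerivAt_expDecay κ a z).deriv
  have hb : deriv (fun t => (expDecay κ (a, b) t).2) z = (-κ : ℂ) • expDecay κ b z :=
    (hasDerivAt_expDecay κ b z).deriv
  calc diracQ (expDecay κ (a, b)) z
      = (Real.exp (-κ * z) : ℂ) • ((I * κ) • a + b, a - (I * κ) • b) := by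
        rw [diracQ, ha, hb]
        simp only [expDecay, Prod.smul_mk]
        exact Prod.ext (by module) (by module)
    _ = lam • expDecay κ (a, b) z := by
        rw [h₁, h₂, ← Prod.smul_mk, expDecay, smul_comm]

theorem diracQ_expDecay_phase_eq_smul {lam κ : ℝ} (h : lam ^ 2 + κ ^ 2 = 1) (u : Fin 2 → ℂ)
    (z : ℝ) :
    diracQ (expDecay κ (u, (lam - I * κ) • u)) z =
      (lam : ℂ) • expDecay κ (u, (lam - I * κ) • u) z := by
  have hC : (lam : ℂ) ^ 2 + (κ : ℂ) ^ 2 = 1 := by exact_mod_cast h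
  have h₁ : (I * κ + (lam - I * κ) : ℂ) = lam := by ring
  have h₂ : (1 - I * κ * (lam - I * κ) : ℂ) = lam * (lam - I * κ) := by
    linear_combination (-1 : ℂ) * hC + (κ : ℂ) ^ 2 * I_sq
  refine diracQ_expDecay_eq_smul ?_ ?_ z
  · rw [← add_smul, h₁]
  · rw [smul_smul, smul_smul, ← h₂, sub_smul, one_smul]

theorem smul_one_add_I_smul_pauliVec_mulVec_single_zero (lam κ : ℝ) :
    ((lam : ℂ) • (1 : Matrix (Fin 2) (Fin 2) ℂ) + I • pauliVec 0 0 (-κ)).mulVec (Pi.single 0 1) =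
      (lam - I * κ) • Pi.single 0 1 := by
  ext i
  fin_cases i <;> simp [pauliVec, pauli3, sub_eq_add_neg]

/-- Gap-filling property of the family `{D̸(q)}_{q ∈ SU(2)}`: every `λ ∈ (−1,1)` in the
common essential spectral gap is attained as an eigenvalue for some boundary condition
`q = λ·1₂ + i(q⃗·σ) ∈ SU(2)` with scalar part `λ`, with a differentiable,
square-integrable, not identically zero eigenfunction obeying `ψ(0) = (u, qu)`. -/
theorem quaternionicDirac_gap_filling (lam : ℝ) (hlam : |lam| < 1) :
    ∃ (q : Matrix (Fin 2) (Fin 2) ℂ) (q1 q2 q3 : ℝ),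
      q = (lam : ℂ) • (1 : Matrix (Fin 2) (Fin 2) ℂ) + Complex.I • pauliVec q1 q2 q3 ∧
      lam ^ 2 + (q1 ^ 2 + q2 ^ 2 + q3 ^ 2) = 1 ∧
      ∃ (u : Fin 2 → ℂ) (ψ : ℝ → (Fin 2 → ℂ) × (Fin 2 → ℂ)),
        u ≠ 0 ∧
        Differentiable ℝ ψ ∧
        (∃ z : ℝ, 0 ≤ z ∧ ψ z ≠ 0) ∧
        IntegrableOn (fun z => ‖ψ z‖ ^ 2) (Set.Ici (0 : ℝ)) ∧
        ψ 0 = (u, q.mulVec u) ∧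
        ∀ z : ℝ, 0 ≤ z → diracQ ψ z = (lam : ℂ) • ψ z := by
  have hlam2 : 0 < 1 - lam ^ 2 := by nlinarith [abs_lt.mp hlam]
  set κ := Real.sqrt (1 - lam ^ 2)
  have hκ : 0 < κ := Real.sqrt_pos.mpr hlam2
  have hκsq : lam ^ 2 + κ ^ 2 = 1 := by rw [Real.sq_sqrt hlam2.le]; ring
  set u : Fin 2 → ℂ := Pi.single 0 1
  have hu : u ≠ 0 := by simp [u]
  refine ⟨_, 0, 0, -κ, rfl, by linear_combination hκsq, u, expDecay κ (u, (lam - I * κ) • u), hu,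
    differentiable_expDecay κ _, ⟨0, le_rfl, ?_⟩, integrableOn_Ici_norm_sq_expDecay hκ _, ?_,
    fun z _ => diracQ_expDecay_phase_eq_smul hκsq u z⟩
  · rw [expDecay_zero]
    exact fun h => hu (congrArg Prod.fst h)
  · rw [expDecay_zero, smul_one_add_I_smul_pauliVec_mulVec_single_zero]
end

section
/- Let Γ ∈ SU(2) and let Q be a nonzero 2×2 complex matrix of the quaternionic form [[α, −conj(β)],[β, conj(α)]] with α, β ∈ ℂ, and set |Q| := √(|α|² + |β|²) and μ := (1/2)·tr(Q†Γ) (which is a real number). If |μ| < |Q|, then setting a := √(|Q|² − μ²) > 0, there exists a nonzero vector u ∈ ℂ² such that the function ψ(z) := (u·e^{−a z}, (Γu)·e^{−a z}) satisfies, for all z ≥ 0, the eigenvalue equation (−i·φ′(z) + Q†·χ(z), Q·φ(z) + i·χ′(z)) = μ·(φ(z), χ(z)) where ψ = (φ, χ); thus ψ is a square-integrable, exponentially decaying eigenfunction of the half-space Weyl fiber operator h̃^W(Q;Γ) with eigenvalue μ, obeying the boundary condition ψ(0) = (u, Γu). -/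
/-! The matrix `M = Q†Γ` has trace `2μ` and, since `det Γ = 1`, determinant `|Q|² = μ² + a²`;
so `λ = μ - i a` is a root of its characteristic polynomial `X² - 2μX + |Q|²`, and we take `u`
an eigenvector. As `Q Q† = |Q|² = λ λ̄`, applying `Q` to `Q†(Γu) = λu` gives `Qu = λ̄ Γu`.
Along the ansatz `e^{-az}(u, Γu)` the derivatives contribute `±i a`, which shift `λ` and `λ̄`
back to `μ`. -/

open MeasureTheory

/-- The half-space Weyl fiber operator `h̃^W(Q;Γ) = [[−i d/dz, Q†],[Q, i d/dz]]`
at boundary momentum quaternion `Q`, acting on differentiable functions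
`ψ = (φ, χ) : ℝ → ℂ² × ℂ²`. -/
noncomputable def weylFiber (Q : Matrix (Fin 2) (Fin 2) ℂ)
    (ψ : ℝ → (Fin 2 → ℂ) × (Fin 2 → ℂ)) (z : ℝ) : (Fin 2 → ℂ) × (Fin 2 → ℂ) :=
  ((-Complex.I) • deriv (fun t => (ψ t).1) z + Q.conjTranspose.mulVec ((ψ z).2),
   Q.mulVec ((ψ z).1) + Complex.I • deriv (fun t => (ψ t).2) z)

open scoped Matrix

namespace Matrix

theorem exists_mulVec_eq_smul_of_isRoot_charpoly {n A : Type*} [Fintype n] [DecidableEq n]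
    [CommRing A] [IsDomain A] {M : Matrix n n A} {t : A} (h : M.charpoly.IsRoot t) :
    ∃ v ≠ 0, M *ᵥ v = t • v := by
  obtain ⟨v, hv, hMv⟩ := exists_mulVec_eq_zero_iff.2 ((M.eval_charpoly t).symm.trans h)
  refine ⟨v, hv, ?_⟩
  rw [sub_mulVec, scalar_apply, ← smul_one_eq_diagonal, smul_mulVec, one_mulVec,
    sub_eq_zero] at hMv
  exact hMv.symm

theorem isRoot_charpoly_fin_two_of_trace_det {M : Matrix (Fin 2) (Fin 2) ℂ} {μ a : ℂ}
    (htr : M.trace = 2 * μ) (hdet : M.det = μ ^ 2 + a ^ 2) :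
    M.charpoly.IsRoot (μ - a * Complex.I) := by
  simp only [Polynomial.IsRoot, charpoly_fin_two, htr, hdet, Polynomial.eval_add,
    Polynomial.eval_sub, Polynomial.eval_mul, Polynomial.eval_pow, Polynomial.eval_X,
    Polynomial.eval_C]
  linear_combination a ^ 2 * Complex.I_sq

theorem mulVec_eq_smul_of_mul_eq_smul_one {m n K : Type*} [Fintype m] [Fintype n]
    [DecidableEq m] [Field K] {Q : Matrix m n K} {P : Matrix n m K} {s t : K}
    (hQP : Q * P = (s * t) • 1) (hs : s ≠ 0) {v : n → K} {w : m → K}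
    (hPw : P *ᵥ w = s • v) : Q *ᵥ v = t • w := by
  have : s • Q *ᵥ v = s • t • w := by
    rw [← mulVec_smul, ← hPw, mulVec_mulVec, hQP, smul_mulVec, one_mulVec, smul_smul]
  exact smul_right_injective _ hs this

end Matrix

section Quaternion

open ComplexConjugate

variable (α β : ℂ)

theorem det_quaternionMatrix :
    (!![α, -conj β; β, conj α]).det = ((‖α‖ ^ 2 + ‖β‖ ^ 2 : ℝ) : ℂ) := by
  rw [Matrix.det_fin_two_of]
  push_cast [← Complex.mul_conj', mul_comm β]
  ring

theorem quaternionMatrix_mul_conjTranspose :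
    !![α, -conj β; β, conj α] * (!![α, -conj β; β, conj α])ᴴ =
      ((‖α‖ ^ 2 + ‖β‖ ^ 2 : ℝ) : ℂ) • 1 := by
  ext i j
  fin_cases i <;> fin_cases j <;>
    simp [Matrix.mul_apply, Fin.sum_univ_two, ← Complex.mul_conj'] <;> ring

end Quaternion

theorem hasDerivAt_cexp_mul_smul {E : Type*} [NormedAddCommGroup E] [NormedSpace ℂ E]
    (c : ℂ) (x : E) (z : ℝ) :
    HasDerivAt (fun t : ℝ => Complex.exp (c * t) • x) ((c * Complex.exp (c * z)) • x) z := by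
  have h := ((hasDerivAt_id (z : ℂ)).const_mul c).cexp.comp_ofReal.smul_const x
  simpa [mul_comm] using h

theorem weylFiber_cexp_smul (Q : Matrix (Fin 2) (Fin 2) ℂ) {a μ : ℂ} {v w : Fin 2 → ℂ}
    (hv : Qᴴ *ᵥ w = (μ - a * Complex.I) • v) (hw : Q *ᵥ v = (μ + a * Complex.I) • w) (z : ℝ) :
    weylFiber Q (fun t => (Complex.exp (-a * t) • v, Complex.exp (-a * t) • w)) z =
      μ • (Complex.exp (-a * z) • v, Complex.exp (-a * z) • w) := by
  simp only [weylFiber, (hasDerivAt_cexp_mul_smul _ _ z).deriv, Matrix.mulVec_smul, hv, hw,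
    smul_smul, ← add_smul, Prod.smul_mk]
  congr 2 <;> ring

theorem integrableOn_Ici_norm_cexp_smul_sq {E : Type*} [NormedAddCommGroup E] [NormedSpace ℂ E]
    {a : ℝ} (ha : 0 < a) (x : E) :
    IntegrableOn (fun z : ℝ => ‖Complex.exp (-(a : ℂ) * z) • x‖ ^ 2) (Set.Ici 0) := by
  have h : (fun z : ℝ => ‖Complex.exp (-(a : ℂ) * z) • x‖ ^ 2) =
      fun z => ‖x‖ ^ 2 * Real.exp (-(2 * a) * z) := by
    funext z
    rw [norm_smul, Complex.norm_exp, ← Complex.ofReal_neg, ← Complex.ofReal_mul,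
      Complex.ofReal_re, mul_pow, ← Real.exp_nat_mul]
    ring_nf
  rw [h, integrableOn_Ici_iff_integrableOn_Ioi]
  exact (exp_neg_integrableOn_Ioi 0 (by positivity)).const_mul _

theorem weyl_fermi_surface_eigenfunction_general
    (Γ : Matrix (Fin 2) (Fin 2) ℂ)
    (hdet : Γ.det = 1)
    (α β : ℂ)
    (Q : Matrix (Fin 2) (Fin 2) ℂ)
    (hQ : Q = !![α, -(starRingEnd ℂ β); β, starRingEnd ℂ α])
    (μ : ℝ) (hμ : (μ : ℂ) = (1 / 2) * (Q.conjTranspose * Γ).trace)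
    (hgap : |μ| < Real.sqrt (‖α‖ ^ 2 + ‖β‖ ^ 2)) :
    0 < Real.sqrt (Real.sqrt (‖α‖ ^ 2 + ‖β‖ ^ 2) ^ 2 - μ ^ 2) ∧
    ∃ u : Fin 2 → ℂ, u ≠ 0 ∧
      ∀ ψ : ℝ → (Fin 2 → ℂ) × (Fin 2 → ℂ),
        (∀ z : ℝ, ψ z =
          (Complex.exp
              (-(Real.sqrt (Real.sqrt (‖α‖ ^ 2 + ‖β‖ ^ 2) ^ 2
                  - μ ^ 2) : ℂ) * (z : ℂ)) • u,
           Complex.exp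
              (-(Real.sqrt (Real.sqrt (‖α‖ ^ 2 + ‖β‖ ^ 2) ^ 2
                  - μ ^ 2) : ℂ) * (z : ℂ)) • Γ.mulVec u)) →
        (∀ z : ℝ, 0 ≤ z → weylFiber Q ψ z = (μ : ℂ) • ψ z) ∧
        ψ 0 = (u, Γ.mulVec u) ∧
        IntegrableOn (fun z => ‖ψ z‖ ^ 2) (Set.Ici (0 : ℝ)) := by
  set k := ‖α‖ ^ 2 + ‖β‖ ^ 2
  set a := Real.sqrt (Real.sqrt k ^ 2 - μ ^ 2)
  have hμk : μ ^ 2 < Real.sqrt k ^ 2 := sq_lt_sq' (abs_lt.1 hgap).1 (abs_lt.1 hgap).2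
  have ha : 0 < a := Real.sqrt_pos.2 (sub_pos.2 hμk)
  have hka : (k : ℂ) = μ ^ 2 + a ^ 2 := by
    have ha2 : a ^ 2 = Real.sqrt k ^ 2 - μ ^ 2 := Real.sq_sqrt (sub_pos.2 hμk).le
    have hk : Real.sqrt k ^ 2 = k := Real.sq_sqrt (by positivity)
    exact_mod_cast (by linarith : k = μ ^ 2 + a ^ 2)
  obtain ⟨u, hu, hMu⟩ := Matrix.exists_mulVec_eq_smul_of_isRoot_charpoly
    (Matrix.isRoot_charpoly_fin_two_of_trace_det (M := Qᴴ * Γ) (μ := μ) (a := a)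
      (by linear_combination -2 * hμ)
      (by rw [Matrix.det_mul, hdet, mul_one, Matrix.det_conjTranspose, hQ,
        det_quaternionMatrix, Complex.star_def, Complex.conj_ofReal, hka]))
  have hs : (μ - a * Complex.I : ℂ) ≠ 0 := fun h => by
    simpa [ha.ne'] using congrArg Complex.im h
  have hQu : Q *ᵥ u = (μ + a * Complex.I) • Γ *ᵥ u :=
    Matrix.mulVec_eq_smul_of_mul_eq_smul_one (P := Qᴴ)
      (by
        rw [hQ, quaternionMatrix_mul_conjTranspose, hka]
        congr 1
        linear_combination (a : ℂ) ^ 2 * Complex.I_sq)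
      hs
      (by rw [Matrix.mulVec_mulVec, hMu])
  refine ⟨ha, u, hu, fun ψ hψ => ?_⟩
  obtain rfl : ψ = _ := funext hψ
  refine ⟨fun z _ => weylFiber_cexp_smul Q (by rw [Matrix.mulVec_mulVec, hMu]) hQu z,
    by simp, ?_⟩
  simpa only [Prod.smul_mk] using integrableOn_Ici_norm_cexp_smul_sq ha (u, Γ *ᵥ u)

/-- Let `Γ ∈ SU(2)`, let `Q = [[α, −conj(β)],[β, conj(α)]]` be a nonzero quaternionic
momentum matrix with modulus `|Q| = √(|α|² + |β|²)`, and let `μ = (1/2)·tr(Q†Γ)` (a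
real number).  If `|μ| < |Q|` then, with `a := √(|Q|² − μ²) > 0`, there is a nonzero
`u ∈ ℂ²` such that `ψ(z) = (u·e^{−a z}, (Γu)·e^{−a z})` is a square-integrable,
exponentially decaying eigenfunction of the half-space Weyl fiber operator
`h̃^W(Q;Γ)` with eigenvalue `μ`, obeying the boundary condition `ψ(0) = (u, Γu)`:
the momentum `Q` lies on the Fermi surface `S_μ`. -/
theorem weyl_fermi_surface_eigenfunction
    (Γ : Matrix (Fin 2) (Fin 2) ℂ)
    (hΓ : Γ ∈ Matrix.unitaryGroup (Fin 2) ℂ) (hdet : Γ.det = 1)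
    (α β : ℂ) (hQ0 : ¬(α = 0 ∧ β = 0))
    (Q : Matrix (Fin 2) (Fin 2) ℂ)
    (hQ : Q = !![α, -(starRingEnd ℂ β); β, starRingEnd ℂ α])
    (μ : ℝ) (hμ : (μ : ℂ) = (1 / 2) * (Q.conjTranspose * Γ).trace)
    (hgap : |μ| < Real.sqrt (‖α‖ ^ 2 + ‖β‖ ^ 2)) :
    0 < Real.sqrt (Real.sqrt (‖α‖ ^ 2 + ‖β‖ ^ 2) ^ 2 - μ ^ 2) ∧
    ∃ u : Fin 2 → ℂ, u ≠ 0 ∧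
      ∀ ψ : ℝ → (Fin 2 → ℂ) × (Fin 2 → ℂ),
        (∀ z : ℝ, ψ z =
          (Complex.exp
              (-(Real.sqrt (Real.sqrt (‖α‖ ^ 2 + ‖β‖ ^ 2) ^ 2
                  - μ ^ 2) : ℂ) * (z : ℂ)) • u,
           Complex.exp
              (-(Real.sqrt (Real.sqrt (‖α‖ ^ 2 + ‖β‖ ^ 2) ^ 2
                  - μ ^ 2) : ℂ) * (z : ℂ)) • Γ.mulVec u)) →
        (∀ z : ℝ, 0 ≤ z → weylFiber Q ψ z = (μ : ℂ) • ψ z) ∧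
        ψ 0 = (u, Γ.mulVec u) ∧
        IntegrableOn (fun z => ‖ψ z‖ ^ 2) (Set.Ici (0 : ℝ)) :=
  weyl_fermi_surface_eigenfunction_general Γ hdet α β Q hQ μ hμ hgap
end
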